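/- arXiv:1312.5677 — 9 statements merged into one kernel-verified Lean document; each statement's English description precedes it below -/
import Mathlib

section
/- Let n be a natural number with n ≥ 1, and let s_n = 1/√(n²+1). Then for every real x with s_n ≤ x ≤ 1, one has C_n(x) = |T_n(x)| + |x·T_n'(x)| ≥ 1. -/
open Polynomial

/-- For `n ≥ 1` and `s_n = 1/√(n²+1) ≤ x ≤ 1`, one has
`C_n(x) = |T_n(x)| + |x·T_n'(x)| ≥ 1`. -/
theorem chebyshev_C_ge_one_of_sn_le
    (n : ℕ) (hn : 1 ≤ n) (x : ℝ)
    (hx1 : 1 / Real.sqrt ((n : ℝ) ^ 2 + 1) ≤ x) (hx2 : x ≤ 1) :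
    1 ≤ |(Chebyshev.T ℝ n).eval x| + |x * (derivative (Chebyshev.T ℝ n)).eval x| := by
  have hs : (0:ℝ) < Real.sqrt ((n : ℝ) ^ 2 + 1) := by
    apply Real.sqrt_pos.2; positivity
  have hx0 : 0 < x := lt_of_lt_of_le (by positivity) hx1
  -- squared form of hx1 : x^2 * (n^2+1) ≥ 1
  have hxs : 1 ≤ x * Real.sqrt ((n:ℝ)^2 + 1) := by
    rw [div_le_iff₀ hs] at hx1; linarith
  have hsq : 1 ≤ x^2 * ((n:ℝ)^2 + 1) := by
    have h2 : (1:ℝ) ≤ (x * Real.sqrt ((n:ℝ)^2+1))^2 := one_le_pow₀ hxs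
    have h3 : (Real.sqrt ((n:ℝ)^2+1))^2 = (n:ℝ)^2 + 1 := Real.sq_sqrt (by positivity)
    calc (1:ℝ) ≤ (x * Real.sqrt ((n:ℝ)^2+1))^2 := h2
      _ = x^2 * ((n:ℝ)^2+1) := by rw [mul_pow, h3]
  set θ := Real.arccos x with hθ
  have hcos : Real.cos θ = x := Real.cos_arccos (by linarith) hx2
  have hsin : Real.sin θ = Real.sqrt (1 - x^2) := Real.sin_arccos x
  -- evaluate T
  have hT : (Chebyshev.T ℝ n).eval x = Real.cos ((n:ℝ) * θ) := by
    rw [← hcos, Chebyshev.T_real_cos θ (n:ℤ)]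
    norm_num
  -- derivative
  have hder : (derivative (Chebyshev.T ℝ n)).eval x
      = (n:ℝ) * (Chebyshev.U ℝ ((n:ℤ) - 1)).eval x := by
    rw [Chebyshev.T_derivative_eq_U]
    simp
  have hU : (Chebyshev.U ℝ ((n:ℤ) - 1)).eval x * Real.sin θ = Real.sin ((n:ℝ) * θ) := by
    rw [← hcos, Chebyshev.U_real_cos θ ((n:ℤ) - 1)]
    norm_num
  -- key : n * x ≥ sin θ
  have hsin_nonneg : 0 ≤ Real.sin θ := by rw [hsin]; positivity
  have hkey : Real.sin θ ≤ (n:ℝ) * x := by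
    have hnx : 0 ≤ (n:ℝ) * x := by positivity
    have h1 : (Real.sin θ)^2 = 1 - x^2 := by
      rw [hsin, Real.sq_sqrt]; nlinarith
    nlinarith [sq_nonneg (Real.sin θ - (n:ℝ)*x)]
  set u := (Chebyshev.U ℝ ((n:ℤ) - 1)).eval x with hu
  have habs : |x * (derivative (Chebyshev.T ℝ n)).eval x| = (n:ℝ) * x * |u| := by
    rw [hder, abs_mul, abs_mul, abs_of_pos hx0, Nat.abs_cast]
    ring
  have hbound : |Real.sin ((n:ℝ) * θ)| ≤ (n:ℝ) * x * |u| := by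
    have : |Real.sin ((n:ℝ) * θ)| = |u| * Real.sin θ := by
      rw [← hU, abs_mul, abs_of_nonneg hsin_nonneg]
    rw [this]
    calc |u| * Real.sin θ ≤ |u| * ((n:ℝ) * x) := by
          exact mul_le_mul_of_nonneg_left hkey (abs_nonneg u)
      _ = (n:ℝ) * x * |u| := by ring
  rw [hT, habs]
  have h1 : |Real.cos ((n:ℝ)*θ)| + |Real.sin ((n:ℝ)*θ)| ≥ 1 := by
    nlinarith [Real.sin_sq_add_cos_sq ((n:ℝ)*θ), abs_nonneg (Real.cos ((n:ℝ)*θ)),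
      abs_nonneg (Real.sin ((n:ℝ)*θ)), sq_abs (Real.cos ((n:ℝ)*θ)),
      sq_abs (Real.sin ((n:ℝ)*θ)), Real.abs_cos_le_one ((n:ℝ)*θ),
      Real.abs_sin_le_one ((n:ℝ)*θ)]
  linarith
end

section
/- Let n be an even natural number with n ≥ 2, and let s_n = 1/√(n²+1). Then for every real x with 0 ≤ x ≤ s_n, one has C_n(x) = |T_n(x)| + |x·T_n'(x)| ≥ 1. -/
/-!
Write `x = sin δ` with `0 ≤ δ < π/2`. For even `n` the substitution `θ = π/2 - δ` in
`T_n(cos θ) = cos nθ` and `T_n'(cos θ) sin θ = n sin nθ` gives, with `t = nδ`,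
`C_n(x) = |cos t| + n tan δ |sin t|`. The bound `x ≤ s_n` says exactly `n tan δ ≤ 1`, so
`t ≤ n tan δ ≤ 1`, and then `C_n(x) ≥ cos t + t sin t ≥ 1` by the Taylor bounds for `cos`
and `sin`.
-/

open Polynomial

namespace Real

theorem one_le_cos_add_mul_sin {t : ℝ} (ht0 : 0 ≤ t) (ht1 : t ≤ 1) :
    1 ≤ cos t + t * sin t := by
  have hcos := one_sub_sq_div_two_le_cos (x := t)
  have hsin := mul_le_mul_of_nonneg_left (sin_ge_sub_cube ht0) ht0
  nlinarith [pow_le_one₀ ht0 ht1 (n := 2)]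

theorem mul_le_sqrt_one_sub_sq {a x : ℝ} (hx0 : 0 ≤ x)
    (hx : x ≤ 1 / √(a ^ 2 + 1)) : a * x ≤ √(1 - x ^ 2) := by
  have hx' : x ^ 2 * (a ^ 2 + 1) ≤ 1 := by
    rwa [le_div_iff₀ (by positivity), ← sqrt_sq hx0, ← sqrt_mul (sq_nonneg x), sqrt_le_one] at hx
  exact le_sqrt_of_sq_le (by nlinarith)

theorem one_div_sqrt_sq_add_one_lt_one {a : ℝ} (ha : a ≠ 0) : 1 / √(a ^ 2 + 1) < 1 := by
  rw [div_lt_one (by positivity), lt_sqrt zero_le_one]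
  nlinarith [sq_pos_of_ne_zero ha]

end Real

namespace Polynomial.Chebyshev
open Real

theorem abs_T_real_sin_of_even {n : ℤ} (hn : Even n) (δ : ℝ) :
    |(T ℝ n).eval (sin δ)| = |cos (n * δ)| := by
  obtain ⟨m, rfl⟩ := hn
  have hangle : ((m + m : ℤ) : ℝ) * (π / 2 - δ) = m * π - (m + m : ℤ) * δ := by push_cast; ring
  rw [← cos_pi_div_two_sub, T_real_cos, hangle, cos_int_mul_pi_sub, abs_mul, abs_neg_one_zpow,
    one_mul]

theorem abs_derivative_T_real_sin_mul_cos_of_even {n : ℤ} (hn : Even n) (δ : ℝ) :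
    |(derivative (T ℝ n)).eval (sin δ) * cos δ| = |n * sin (n * δ)| := by
  obtain ⟨m, rfl⟩ := hn
  obtain ⟨θ, rfl⟩ : ∃ θ, δ = π / 2 - θ := ⟨π / 2 - δ, by ring⟩
  have hangle : ((m + m - 1 : ℤ) + 1 : ℝ) * θ = m * π - (m + m : ℤ) * (π / 2 - θ) := by
    push_cast; ring
  rw [sin_pi_div_two_sub, cos_pi_div_two_sub, T_derivative_eq_U, eval_mul, eval_intCast,
    mul_assoc, U_real_cos, hangle, sin_int_mul_pi_sub, abs_mul, abs_mul, abs_neg, abs_mul,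
    abs_neg_one_zpow, one_mul]

theorem one_le_abs_T_real_sin_add_abs_sin_mul_derivative_T {n : ℕ} (hn : Even n) {δ : ℝ}
    (hδ0 : 0 ≤ δ) (hδ : δ < π / 2) (htan : n * tan δ ≤ 1) :
    1 ≤ |(T ℝ n).eval (sin δ)| + |sin δ * (derivative (T ℝ n)).eval (sin δ)| := by
  have hcos : 0 < cos δ := cos_pos_of_mem_Ioo ⟨by linarith [pi_pos], hδ⟩
  have hδ_le_tan : δ ≤ tan δ := le_tan hδ0 hδ
  set t := (n : ℝ) * δ
  have ht0 : 0 ≤ t := by positivity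
  have ht1 : t ≤ 1 := (mul_le_mul_of_nonneg_left hδ_le_tan n.cast_nonneg).trans htan
  have hsin_t : 0 ≤ sin t := sin_nonneg_of_nonneg_of_le_pi ht0 (by linarith [pi_gt_three])
  have hcos_t : 0 ≤ cos t :=
    cos_nonneg_of_mem_Icc ⟨by linarith [pi_pos], by linarith [pi_gt_three]⟩
  have hT : |(T ℝ n).eval (sin δ)| = cos t := by
    rw [abs_T_real_sin_of_even hn.natCast, Int.cast_natCast, abs_of_nonneg hcos_t]
  have hdT : |sin δ * (derivative (T ℝ n)).eval (sin δ)| = tan δ * (n * sin t) := by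
    nth_rw 1 [← tan_mul_cos hcos.ne']
    rw [mul_right_comm, mul_assoc, abs_mul, abs_of_nonneg (hδ0.trans hδ_le_tan),
      abs_derivative_T_real_sin_mul_cos_of_even hn.natCast, Int.cast_natCast, abs_mul,
      Nat.abs_cast, abs_of_nonneg hsin_t]
  calc 1 ≤ cos t + t * sin t := one_le_cos_add_mul_sin ht0 ht1
    _ = cos t + δ * (n * sin t) := by ring
    _ ≤ cos t + tan δ * (n * sin t) := by gcongr
    _ = _ := by rw [hT, hdT]

end Polynomial.Chebyshev

theorem chebyshev_C_ge_one_of_even_general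
    (n : ℕ) (hne : Even n) (x : ℝ)
    (hx0 : 0 ≤ x) (hx1 : x ≤ 1 / Real.sqrt ((n : ℝ) ^ 2 + 1)) :
    1 ≤ |(Chebyshev.T ℝ n).eval x| + |x * (derivative (Chebyshev.T ℝ n)).eval x| := by
  obtain rfl | hn := n.eq_zero_or_pos
  · simp
  have hx_lt_one : x < 1 :=
    hx1.trans_lt (Real.one_div_sqrt_sq_add_one_lt_one (Nat.cast_ne_zero.2 hn.ne'))
  have hsqrt : 0 < √(1 - x ^ 2) := Real.sqrt_pos.2 (by nlinarith)
  rw [← Real.sin_arcsin (by linarith) hx_lt_one.le]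
  refine Chebyshev.one_le_abs_T_real_sin_add_abs_sin_mul_derivative_T hne
    (Real.arcsin_nonneg.2 hx0) (Real.arcsin_lt_pi_div_two.2 hx_lt_one) ?_
  rw [Real.tan_arcsin, ← mul_div_assoc, div_le_one hsqrt]
  exact Real.mul_le_sqrt_one_sub_sq hx0 hx1

/-- For even `n ≥ 2` and `0 ≤ x ≤ s_n = 1/√(n²+1)`, one has
`C_n(x) = |T_n(x)| + |x·T_n'(x)| ≥ 1`. -/
theorem chebyshev_C_ge_one_of_even
    (n : ℕ) (hn : 2 ≤ n) (hne : Even n) (x : ℝ)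
    (hx0 : 0 ≤ x) (hx1 : x ≤ 1 / Real.sqrt ((n : ℝ) ^ 2 + 1)) :
    1 ≤ |(Chebyshev.T ℝ n).eval x| + |x * (derivative (Chebyshev.T ℝ n)).eval x| :=
  chebyshev_C_ge_one_of_even_general n hne x hx0 hx1
end

section
/- For every natural number m ≥ 0 and every real x with |x| ≤ 1, one has |T_{2m+1}(x)| ≤ (2m+1)·|x|. -/
open Polynomial

lemma cheb_abs_le_one (n : ℤ) (x : ℝ) (hx : |x| ≤ 1) :
    |(Chebyshev.T ℝ n).eval x| ≤ 1 := by
  rw [abs_le] at hx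
  obtain ⟨θ, _, hθ⟩ : ∃ θ, θ ∈ Set.Icc (0:ℝ) Real.pi ∧ Real.cos θ = x :=
    ⟨Real.arccos x, ⟨Real.arccos_nonneg x, Real.arccos_le_pi x⟩, Real.cos_arccos hx.1 hx.2⟩
  rw [← hθ, Polynomial.Chebyshev.T_real_cos]
  exact Real.abs_cos_le_one _

/-- For `m ≥ 0` and `|x| ≤ 1`, one has `|T_{2m+1}(x)| ≤ (2m+1)·|x|`. -/
theorem chebyshev_T_odd_le
    (m : ℕ) (x : ℝ) (hx : |x| ≤ 1) :
    |(Chebyshev.T ℝ (2 * m + 1)).eval x| ≤ (2 * (m : ℝ) + 1) * |x| := by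
  induction m with
  | zero => simp [Polynomial.Chebyshev.T_one]
  | succ m ih =>
      have h1 : (2 * ((m:ℤ) + 1) + 1) = (2 * m + 1) + 2 := by ring
      push_cast
      rw [h1, Polynomial.Chebyshev.T_add_two]
      have h2 : |(Chebyshev.T ℝ ((2*m+1) + 1)).eval x| ≤ 1 := cheb_abs_le_one _ x hx
      calc |(2 * X * Chebyshev.T ℝ ((2*m+1)+1) - Chebyshev.T ℝ (2*m+1)).eval x|
          ≤ 2 * |x| * |(Chebyshev.T ℝ ((2*m+1)+1)).eval x|
            + |(Chebyshev.T ℝ (2*m+1)).eval x| := by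
            simp only [Polynomial.eval_sub, Polynomial.eval_mul, Polynomial.eval_ofNat,
              Polynomial.eval_X]
            calc _ ≤ |(2 * x) * (Chebyshev.T ℝ ((2*m+1)+1)).eval x|
                      + |(Chebyshev.T ℝ (2*m+1)).eval x| := abs_sub _ _
              _ = 2 * |x| * |(Chebyshev.T ℝ ((2*m+1)+1)).eval x|
                      + |(Chebyshev.T ℝ (2*m+1)).eval x| := by
                    rw [abs_mul, abs_mul]; norm_num
        _ ≤ 2 * |x| * 1 + (2 * (m : ℝ) + 1) * |x| := by
            gcongr
        _ = (2 * ((m:ℝ) + 1) + 1) * |x| := by ring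
end

section
/- Let m ≥ 1 be a natural number and s_{2m} = 1/√(4m²+1). Then for every real x with 0 < x < s_{2m}, one has (−1)^m · T_{2m}(x) > 0 and (−1)^{m+1} · T_{2m}'(x) > 0. That is, if m is even then T_{2m}(x) > 0 and T_{2m}'(x) < 0 on (0, s_{2m}), while if m is odd then T_{2m}(x) < 0 and T_{2m}'(x) > 0 on (0, s_{2m}). -/
/-!
Substitute `x = sin φ` with `φ = arcsin x`. Then `T_{2m}(sin φ) = cos (2m (π/2 - φ))` equals
`(-1)^m cos (2mφ)`, and `T_{2m}'(sin φ) cos φ = 2m sin (2m (π/2 - φ))` equals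
`(-1)^(m+1) · 2m sin (2mφ)`. Since `x < s_{2m} < 1/(2m)`, Jordan's inequality `sin y ≥ 2y/π`
forces `0 < 2mφ < π/2`, where `cos φ`, `cos (2mφ)` and `sin (2mφ)` are all positive.
-/

open Polynomial Real

namespace Polynomial.Chebyshev

theorem derivative_T_real_cos_mul_sin (n : ℤ) (θ : ℝ) :
    (derivative (T ℝ n)).eval (cos θ) * sin θ = n * sin (n * θ) := by
  rw [T_derivative_eq_U, eval_mul, eval_intCast, mul_assoc, U_real_cos]
  push_cast
  ring_nf

theorem neg_one_pow_mul_T_two_mul_real_sin (n : ℕ) (φ : ℝ) :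
    (-1) ^ n * (T ℝ (2 * n)).eval (sin φ) = cos (2 * n * φ) := by
  rw [← cos_pi_div_two_sub, T_real_cos,
    show ((2 * n : ℤ) : ℝ) * (π / 2 - φ) = n * π - 2 * n * φ by push_cast; ring,
    cos_nat_mul_pi_sub, ← mul_assoc, ← pow_add, Even.neg_one_pow ⟨n, rfl⟩, one_mul]

theorem neg_one_pow_succ_mul_derivative_T_two_mul_real_sin_mul_cos (n : ℕ) (φ : ℝ) :
    (-1) ^ (n + 1) * (derivative (T ℝ (2 * n))).eval (sin φ) * cos φ =
      2 * n * sin (2 * n * φ) := by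
  have h := derivative_T_real_cos_mul_sin (2 * n) (π / 2 - φ)
  rw [cos_pi_div_two_sub, sin_pi_div_two_sub,
    show ((2 * n : ℤ) : ℝ) * (π / 2 - φ) = n * π - 2 * n * φ by push_cast; ring,
    sin_nat_mul_pi_sub] at h
  rw [mul_assoc, h, pow_succ]
  push_cast
  linear_combination
    (2 * n * sin (2 * n * φ)) * (Even.neg_one_pow ⟨n, rfl⟩ : (-1 : ℝ) ^ (n + n) = 1)

end Polynomial.Chebyshev

theorem Real.arcsin_lt_of_lt_two_div_pi_mul {x y : ℝ} (hy₀ : 0 ≤ y) (hy : y ≤ π / 2)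
    (hx : x < 2 / π * y) : arcsin x < y :=
  (arcsin_lt_iff_lt_sin' ⟨by linarith [pi_pos], hy⟩).2 (hx.trans_le (mul_le_sin hy₀ hy))

theorem one_div_sqrt_sq_add_one_lt_one_div {a : ℝ} (ha : 0 < a) : 1 / √(a ^ 2 + 1) < 1 / a :=
  one_div_lt_one_div_of_lt ha (lt_sqrt_of_sq_lt (lt_add_one _))

/-- For `m ≥ 1` and `0 < x < s_{2m} = 1/√(4m²+1)`, one has
`(−1)^m · T_{2m}(x) > 0` and `(−1)^{m+1} · T_{2m}'(x) > 0`. -/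
theorem chebyshev_sign_on_small_interval
    (m : ℕ) (hm : 1 ≤ m) (x : ℝ)
    (hx0 : 0 < x) (hx1 : x < 1 / Real.sqrt (4 * (m : ℝ) ^ 2 + 1)) :
    0 < (-1 : ℝ) ^ m * (Chebyshev.T ℝ (2 * m)).eval x ∧
    0 < (-1 : ℝ) ^ (m + 1) * (derivative (Chebyshev.T ℝ (2 * m))).eval x := by
  have hm₁ : (1 : ℝ) ≤ m := by exact_mod_cast hm
  have hx : x < 1 / (2 * m) := by
    have h := one_div_sqrt_sq_add_one_lt_one_div (a := 2 * m) (by positivity)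
    rw [mul_pow, show (2 : ℝ) ^ 2 = 4 by norm_num] at h
    exact hx1.trans h
  set φ := arcsin x
  have hxφ : sin φ = x := sin_arcsin (by linarith) (by
    linarith [one_div_le_one_div_of_le two_pos (by linarith : (2 : ℝ) ≤ 2 * m)])
  have hφ₀ : 0 < φ := arcsin_pos.2 hx0
  have hφ : 2 * m * φ < π / 2 := by
    have : φ < π / (4 * m) := arcsin_lt_of_lt_two_div_pi_mul (by positivity)
      (by rw [div_le_div_iff₀ (by positivity) two_pos]; nlinarith [pi_pos])
      (by convert hx using 1; field_simp; ring)
    rw [lt_div_iff₀ (by positivity)] at this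
    linarith
  have hmφ : 0 < 2 * m * φ := by positivity
  have hcosφ : 0 < cos φ := cos_pos_of_mem_Ioo ⟨by linarith [pi_pos], by nlinarith⟩
  rw [← hxφ, Chebyshev.neg_one_pow_mul_T_two_mul_real_sin]
  refine ⟨cos_pos_of_mem_Ioo ⟨by linarith [pi_pos], hφ⟩, pos_of_mul_pos_left ?_ hcosφ.le⟩
  rw [Chebyshev.neg_one_pow_succ_mul_derivative_T_two_mul_real_sin_mul_cos]
  exact mul_pos (by positivity) (sin_pos_of_pos_of_lt_pi hmφ (by linarith [pi_pos]))
end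

section
/- Let m ≥ 1 be a natural number and s_{2m} = 1/√(4m²+1). Then for every real x with 0 < x < s_{2m}, one has (−1)^{m+1} · T_{2m}''(x) > 0; that is, T_{2m}''(x) < 0 on (0, s_{2m}) if m is even, and T_{2m}''(x) > 0 on (0, s_{2m}) if m is odd. -/
open Polynomial Real

/-- For `m ≥ 1` and `0 < x < s_{2m} = 1/√(4m²+1)`, one has
`(−1)^{m+1} · T_{2m}''(x) > 0`. -/
theorem chebyshev_second_derivative_sign
    (m : ℕ) (hm : 1 ≤ m) (x : ℝ)
    (hx0 : 0 < x) (hx1 : x < 1 / Real.sqrt (4 * (m : ℝ) ^ 2 + 1)) :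
    0 < (-1 : ℝ) ^ (m + 1) *
      (derivative (derivative (Chebyshev.T ℝ (2 * m)))).eval x := by
  have hπ := Real.pi_gt_three
  set n : ℤ := 2 * (m : ℤ) with hn
  have hmR : (1 : ℝ) ≤ (m : ℝ) := by exact_mod_cast hm
  -- basic bounds from hx1
  have hs : (0 : ℝ) < Real.sqrt (4 * (m : ℝ) ^ 2 + 1) := by
    apply Real.sqrt_pos.mpr; nlinarith
  have hxs : x * Real.sqrt (4 * (m : ℝ) ^ 2 + 1) < 1 := by
    rw [div_eq_mul_inv, one_mul] at hx1
    calc x * Real.sqrt (4 * (m : ℝ) ^ 2 + 1)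
        < (Real.sqrt (4 * (m : ℝ) ^ 2 + 1))⁻¹ * Real.sqrt (4 * (m : ℝ) ^ 2 + 1) := by
          exact mul_lt_mul_of_pos_right hx1 hs
      _ = 1 := inv_mul_cancel₀ (ne_of_gt hs)
  have hx2 : x ^ 2 * (4 * (m : ℝ) ^ 2 + 1) < 1 := by
    have h1 : (x * Real.sqrt (4 * (m : ℝ) ^ 2 + 1)) ^ 2 < 1 := by
      have hpos : 0 < x * Real.sqrt (4 * (m : ℝ) ^ 2 + 1) := mul_pos hx0 hs
      nlinarith
    have h2 : Real.sqrt (4 * (m : ℝ) ^ 2 + 1) ^ 2 = 4 * (m : ℝ) ^ 2 + 1 :=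
      Real.sq_sqrt (by nlinarith)
    nlinarith
  have hx1' : x < 1 := by nlinarith
  have h1x : (0:ℝ) < 1 - x ^ 2 := by nlinarith
  -- set up the angle
  set φ := Real.arcsin x with hφdef
  have hφ0 : 0 < φ := Real.arcsin_pos.mpr hx0
  have hφlt : φ < π / 2 := Real.arcsin_lt_pi_div_two.mpr hx1'
  have hsin : Real.sin φ = x := Real.sin_arcsin (by linarith) (le_of_lt hx1')
  have hcosφ : 0 < Real.cos φ := Real.cos_pos_of_mem_Ioo ⟨by linarith, hφlt⟩
  have hpyth : Real.sin φ ^ 2 + Real.cos φ ^ 2 = 1 := Real.sin_sq_add_cos_sq φ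
  -- 2m sin φ < cos φ
  have hkey : 2 * (m : ℝ) * Real.sin φ < Real.cos φ := by
    rw [hsin]
    nlinarith [sq_nonneg (2 * (m : ℝ) * x - Real.cos φ), sq_nonneg x]
  -- 2mφ < 1
  have htan : φ < Real.tan φ := Real.lt_tan hφ0 hφlt
  have htan' : Real.tan φ = Real.sin φ / Real.cos φ := Real.tan_eq_sin_div_cos φ
  have hφ1 : 2 * (m : ℝ) * φ < 1 := by
    have h1 : 2 * (m : ℝ) * φ < 2 * (m : ℝ) * (Real.sin φ / Real.cos φ) := by
      apply mul_lt_mul_of_pos_left _ (by nlinarith)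
      rw [← htan']; exact htan
    have h2 : 2 * (m : ℝ) * (Real.sin φ / Real.cos φ) < 1 := by
      have heq : 2 * (m : ℝ) * (Real.sin φ / Real.cos φ)
          = (2 * (m : ℝ) * Real.sin φ) / Real.cos φ := by ring
      rw [heq]
      exact (div_lt_one hcosφ).mpr hkey
    linarith
  have hφpos : 0 < 2 * (m : ℝ) * φ := by positivity
  -- positivity of the trig terms
  have hsin2m : 0 < Real.sin (2 * (m : ℝ) * φ) :=
    Real.sin_pos_of_pos_of_lt_pi hφpos (by linarith)
  have hcos2m : 0 < Real.cos (2 * (m : ℝ) * φ) :=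
    Real.cos_pos_of_mem_Ioo ⟨by linarith, by linarith⟩
  set P : ℝ := Real.sin φ * Real.sin (2 * (m : ℝ) * φ) +
      2 * (m : ℝ) * Real.cos φ * Real.cos (2 * (m : ℝ) * φ) with hP
  have hPpos : 0 < P := by
    apply add_pos
    · exact mul_pos (by rw [hsin]; exact hx0) hsin2m
    · exact mul_pos (by positivity) hcos2m
  -- Chebyshev evaluations at x = cos θ, θ = π/2 - φ
  set θ := π / 2 - φ with hθdef
  have hcosθ : Real.cos θ = x := by rw [hθdef, Real.cos_pi_div_two_sub, hsin]
  have hsinθ : Real.sin θ = Real.cos φ := by rw [hθdef, Real.sin_pi_div_two_sub]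
  have hT : (Chebyshev.T ℝ n).eval x = Real.cos ((n : ℝ) * θ) := by
    rw [← hcosθ]; exact Polynomial.Chebyshev.T_real_cos θ n
  have hU : (Chebyshev.U ℝ (n - 1)).eval x * Real.sin θ = Real.sin ((n : ℝ) * θ) := by
    rw [← hcosθ]
    have := Polynomial.Chebyshev.U_real_cos θ (n - 1)
    rw [this]
    push_cast
    ring_nf
  -- the angle identities
  have hnθ : (n : ℝ) * θ = (m : ℝ) * π - 2 * (m : ℝ) * φ := by
    rw [hθdef, hn]; push_cast; ring
  have hcosnθ : Real.cos ((n : ℝ) * θ) = (-1 : ℝ) ^ m * Real.cos (2 * (m : ℝ) * φ) := by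
    rw [hnθ]; exact Real.cos_nat_mul_pi_sub _ m
  have hsinnθ : Real.sin ((n : ℝ) * θ) = -((-1 : ℝ) ^ m * Real.sin (2 * (m : ℝ) * φ)) := by
    rw [hnθ]; exact Real.sin_nat_mul_pi_sub _ m
  -- derivative identities
  have hdd : derivative (derivative (Chebyshev.T ℝ n)) =
      (n : ℝ[X]) * derivative (Chebyshev.U ℝ (n - 1)) := by
    rw [Polynomial.Chebyshev.T_derivative_eq_U, derivative_mul, derivative_intCast]
    ring
  have hident := Polynomial.Chebyshev.add_one_mul_T_eq_poly_in_U (R := ℝ) (n - 1)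
  rw [sub_add_cancel] at hident
  have e1 : ((n : ℝ) - 1 + 1) * (Chebyshev.T ℝ n).eval x =
      x * (Chebyshev.U ℝ (n - 1)).eval x -
        (1 - x ^ 2) * (derivative (Chebyshev.U ℝ (n - 1))).eval x := by
    have h := congrArg (eval x) hident
    simpa using h
  have e2 : (derivative (derivative (Chebyshev.T ℝ n))).eval x =
      (n : ℝ) * (derivative (Chebyshev.U ℝ (n - 1))).eval x := by
    rw [hdd]; simp
  -- combine everything
  set D := (derivative (Chebyshev.U ℝ (n - 1))).eval x with hD
  have hnR : (n : ℝ) = 2 * (m : ℝ) := by rw [hn]; push_cast; ring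
  have hA : 0 < (1 - x ^ 2) * Real.cos φ := mul_pos h1x hcosφ
  -- (1-x²) cos φ * D = (-1)^(m+1) * P  up to factor
  have hmain : (1 - x ^ 2) * Real.cos φ * D = (-1 : ℝ) ^ (m + 1) * P := by
    have h1 : (1 - x ^ 2) * D = x * (Chebyshev.U ℝ (n - 1)).eval x -
        (n : ℝ) * (Chebyshev.T ℝ n).eval x := by linear_combination e1
    have h2 : (1 - x ^ 2) * Real.cos φ * D =
        x * ((Chebyshev.U ℝ (n - 1)).eval x * Real.sin θ) -
          (n : ℝ) * Real.cos φ * (Chebyshev.T ℝ n).eval x := by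
      rw [hsinθ]; linear_combination Real.cos φ * h1
    rw [hU, hT, hsinnθ, hcosnθ, hnR] at h2
    rw [h2, hP, ← hsin, pow_succ]
    ring
  have hgoal : (1 - x ^ 2) * Real.cos φ *
      ((-1 : ℝ) ^ (m + 1) * (derivative (derivative (Chebyshev.T ℝ n))).eval x) =
      2 * (m : ℝ) * P := by
    have hsq : ((-1 : ℝ) ^ (m + 1)) * ((-1 : ℝ) ^ (m + 1)) = 1 := by
      rw [← pow_add]
      exact Even.neg_one_pow ⟨m + 1, rfl⟩
    rw [e2, hnR]
    calc (1 - x ^ 2) * Real.cos φ *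
        ((-1 : ℝ) ^ (m + 1) * (2 * (m : ℝ) * D))
        = 2 * (m : ℝ) * ((-1 : ℝ) ^ (m + 1) * ((1 - x ^ 2) * Real.cos φ * D)) := by ring
      _ = 2 * (m : ℝ) * ((-1 : ℝ) ^ (m + 1) * ((-1 : ℝ) ^ (m + 1) * P)) := by rw [hmain]
      _ = 2 * (m : ℝ) * ((((-1 : ℝ) ^ (m + 1)) * ((-1 : ℝ) ^ (m + 1))) * P) := by ring
      _ = 2 * (m : ℝ) * P := by rw [hsq]; ring
  have hfinal : 0 < (1 - x ^ 2) * Real.cos φ *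
      ((-1 : ℝ) ^ (m + 1) * (derivative (derivative (Chebyshev.T ℝ n))).eval x) := by
    rw [hgoal]; positivity
  by_contra h
  push_neg at h
  exact absurd hfinal (not_lt.mpr (mul_nonpos_of_nonneg_of_nonpos hA.le h))
end

section
/- Let N ≥ 2 be a natural number, let x be real with |x| ≤ 1, and let ε ≥ 0. Suppose the real sequence (e_n) satisfies e_0 = 0, e_1 = 0, and e_n = 2x·e_{n−1} − e_{n−2} + ξ_n for 2 ≤ n ≤ N, where each perturbation satisfies |ξ_n| ≤ ε·(2|x|·|T_{n−1}(x)| + |T_n(x)|). Then |e_N| ≤ ε · 3N(N−1)/2. -/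
open Polynomial

lemma cheb_T_abs_le (x : ℝ) (hx : |x| ≤ 1) (n : ℤ) :
    |(Chebyshev.T ℝ n).eval x| ≤ 1 := by
  obtain ⟨h1, h2⟩ := abs_le.mp hx
  have hc : Real.cos (Real.arccos x) = x := Real.cos_arccos h1 h2
  rw [← hc, Chebyshev.T_real_cos]
  exact Real.abs_cos_le_one _

lemma cheb_U_abs_le (x : ℝ) (hx : |x| ≤ 1) (n : ℕ) :
    |(Chebyshev.U ℝ n).eval x| ≤ n + 1 := by
  induction n with
  | zero => simp [Chebyshev.U_zero]
  | succ m ih =>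
      have h := Chebyshev.U_eq_X_mul_U_add_T ℝ (m : ℤ)
      have he : (Chebyshev.U ℝ ((m : ℤ) + 1)).eval x =
          x * (Chebyshev.U ℝ m).eval x + (Chebyshev.T ℝ ((m : ℤ) + 1)).eval x := by
        rw [h]; simp
      have hcast : ((m + 1 : ℕ) : ℤ) = (m : ℤ) + 1 := by push_cast; ring
      rw [hcast, he]
      calc |x * (Chebyshev.U ℝ m).eval x + (Chebyshev.T ℝ ((m : ℤ) + 1)).eval x|
          ≤ |x * (Chebyshev.U ℝ m).eval x| + |(Chebyshev.T ℝ ((m : ℤ) + 1)).eval x| :=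
            abs_add_le _ _
        _ ≤ 1 * ((m : ℝ) + 1) + 1 := by
            have h1 : |x * (Chebyshev.U ℝ m).eval x| ≤ 1 * ((m : ℝ) + 1) := by
              rw [abs_mul]
              exact mul_le_mul hx ih (abs_nonneg _) zero_le_one
            have h2 := cheb_T_abs_le x hx ((m : ℤ) + 1)
            linarith
        _ = ((m + 1 : ℕ) : ℝ) + 1 := by push_cast; ring

lemma gauss_real (m : ℕ) : ∑ j ∈ Finset.range m, ((j : ℝ) + 1) = m * (m + 1) / 2 := by
  induction m with
  | zero => simp
  | succ k ih => rw [Finset.sum_range_succ, ih]; push_cast; ring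

/-- If `|x| ≤ 1`, `e_0 = e_1 = 0`, `e_n = 2x·e_{n−1} − e_{n−2} + ξ_n` for `2 ≤ n ≤ N`
with `|ξ_n| ≤ ε·(2|x|·|T_{n−1}(x)| + |T_n(x)|)`, then `|e_N| ≤ ε·3N(N−1)/2`. -/
theorem chebyshev_algI_error_bound
    (N : ℕ) (hN : 2 ≤ N) (x : ℝ) (hx : |x| ≤ 1) (ε : ℝ) (hε : 0 ≤ ε)
    (ξ e : ℕ → ℝ)
    (h0 : e 0 = 0) (h1 : e 1 = 0)
    (hrec : ∀ n, 2 ≤ n → n ≤ N → e n = 2 * x * e (n - 1) - e (n - 2) + ξ n)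
    (hξ : ∀ n, 2 ≤ n → n ≤ N →
      |ξ n| ≤ ε * (2 * |x| * |(Chebyshev.T ℝ (n - 1 : ℕ)).eval x| +
        |(Chebyshev.T ℝ n).eval x|)) :
    |e N| ≤ ε * (3 * N * (N - 1) / 2) := by
  -- ξ bound simplified
  have hξ3 : ∀ n, 2 ≤ n → n ≤ N → |ξ n| ≤ 3 * ε := by
    intro n h2 hn
    have hT1 := cheb_T_abs_le x hx ((n - 1 : ℕ) : ℤ)
    have hT2 := cheb_T_abs_le x hx (n : ℤ)
    have := hξ n h2 hn
    have hxx : 2 * |x| * |(Chebyshev.T ℝ ((n - 1 : ℕ) : ℤ)).eval x| +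
        |(Chebyshev.T ℝ (n : ℤ)).eval x| ≤ 3 := by
      have hax : (0:ℝ) ≤ |x| := abs_nonneg x
      have h2x : 2 * |x| * |(Chebyshev.T ℝ ((n - 1 : ℕ) : ℤ)).eval x| ≤ 2 * 1 * 1 := by
        have := abs_nonneg ((Chebyshev.T ℝ ((n - 1 : ℕ) : ℤ)).eval x)
        nlinarith
      linarith
    calc |ξ n| ≤ ε * (2 * |x| * |(Chebyshev.T ℝ ((n - 1 : ℕ) : ℤ)).eval x| +
        |(Chebyshev.T ℝ (n : ℤ)).eval x|) := this
      _ ≤ ε * 3 := by exact mul_le_mul_of_nonneg_left hxx hε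
      _ = 3 * ε := by ring
  -- closed form
  have key : ∀ n, 2 ≤ n → n ≤ N →
      e n = ∑ k ∈ Finset.Icc 2 n, (Chebyshev.U ℝ ((n - k : ℕ) : ℤ)).eval x * ξ k := by
    intro n
    induction n using Nat.strong_induction_on with
    | _ n IH =>
      match n with
      | 0 => omega
      | 1 => omega
      | 2 =>
          intro _ hn
          rw [hrec 2 le_rfl hn]
          simp [h0, h1, Chebyshev.U_zero]
      | 3 =>
          intro _ hn
          rw [hrec 3 (by norm_num) hn]
          have h2' : e 2 = ∑ k ∈ Finset.Icc 2 2, (Chebyshev.U ℝ ((2 - k : ℕ) : ℤ)).eval x * ξ k :=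
            IH 2 (by norm_num) le_rfl (by omega)
          simp only [Finset.Icc_self, Finset.sum_singleton] at h2'
          rw [show (3:ℕ) - 1 = 2 from rfl, show (3:ℕ) - 2 = 1 from rfl, h2', h1]
          rw [show Finset.Icc 2 3 = {2, 3} by decide]
          simp [Chebyshev.U_zero, Chebyshev.U_one]
      | (m + 4) =>
          intro _ hn
          have e1 : e (m + 3) = ∑ k ∈ Finset.Icc 2 (m + 3),
              (Chebyshev.U ℝ ((m + 3 - k : ℕ) : ℤ)).eval x * ξ k :=
            IH (m + 3) (by omega) (by omega) (by omega)
          have e2 : e (m + 2) = ∑ k ∈ Finset.Icc 2 (m + 2),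
              (Chebyshev.U ℝ ((m + 2 - k : ℕ) : ℤ)).eval x * ξ k :=
            IH (m + 2) (by omega) (by omega) (by omega)
          have hr := hrec (m + 4) (by omega) hn
          rw [show m + 4 - 1 = m + 3 from rfl, show m + 4 - 2 = m + 2 from rfl] at hr
          rw [hr, e1, e2]
          rw [Finset.sum_Icc_succ_top (by omega : 2 ≤ m + 3),
              Finset.sum_Icc_succ_top (by omega : 2 ≤ m + 4),
              Finset.sum_Icc_succ_top (by omega : 2 ≤ m + 3)]
          have hA : ∑ k ∈ Finset.Icc 2 (m + 2), (Chebyshev.U ℝ ((m + 4 - k : ℕ) : ℤ)).eval x * ξ k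
              = 2 * x * (∑ k ∈ Finset.Icc 2 (m + 2),
                  (Chebyshev.U ℝ ((m + 3 - k : ℕ) : ℤ)).eval x * ξ k)
                - ∑ k ∈ Finset.Icc 2 (m + 2),
                  (Chebyshev.U ℝ ((m + 2 - k : ℕ) : ℤ)).eval x * ξ k := by
            rw [Finset.mul_sum, ← Finset.sum_sub_distrib]
            apply Finset.sum_congr rfl
            intro k hk
            have hk2 : k ≤ m + 2 := (Finset.mem_Icc.mp hk).2
            have c4 : ((m + 4 - k : ℕ) : ℤ) = ((m + 2 - k : ℕ) : ℤ) + 2 := by omega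
            have c3 : ((m + 3 - k : ℕ) : ℤ) = ((m + 2 - k : ℕ) : ℤ) + 1 := by omega
            rw [c4, c3, Chebyshev.U_add_two]
            simp only [Polynomial.eval_sub, Polynomial.eval_mul, Polynomial.eval_ofNat,
              Polynomial.eval_X]
            ring
          rw [hA]
          have hm30 : ((m + 3 - (m + 3) : ℕ) : ℤ) = 0 := by omega
          have hm40 : ((m + 4 - (m + 4) : ℕ) : ℤ) = 0 := by omega
          have hm41 : ((m + 4 - (m + 3) : ℕ) : ℤ) = 1 := by omega
          rw [hm30, hm40, hm41, Chebyshev.U_zero, Chebyshev.U_one]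
          simp only [Polynomial.eval_one, Polynomial.eval_mul, Polynomial.eval_ofNat,
            Polynomial.eval_X]
          ring
  -- final bound
  rw [key N hN le_rfl]
  calc |∑ k ∈ Finset.Icc 2 N, (Chebyshev.U ℝ ((N - k : ℕ) : ℤ)).eval x * ξ k|
      ≤ ∑ k ∈ Finset.Icc 2 N, |(Chebyshev.U ℝ ((N - k : ℕ) : ℤ)).eval x * ξ k| :=
        Finset.abs_sum_le_sum_abs _ _
    _ ≤ ∑ k ∈ Finset.Icc 2 N, (((N - k : ℕ) : ℝ) + 1) * (3 * ε) := by
        apply Finset.sum_le_sum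
        intro k hk
        obtain ⟨hk2, hkN⟩ := Finset.mem_Icc.mp hk
        rw [abs_mul]
        apply mul_le_mul (cheb_U_abs_le x hx _) (hξ3 k hk2 hkN) (abs_nonneg _)
        positivity
    _ = (∑ k ∈ Finset.Icc 2 N, (((N - k : ℕ) : ℝ) + 1)) * (3 * ε) := by
        rw [Finset.sum_mul]
    _ = (∑ j ∈ Finset.range (N - 1), ((j : ℝ) + 1)) * (3 * ε) := by
        congr 1
        apply Finset.sum_nbij' (fun k ↦ N - k) (fun j ↦ N - j)
        · intro k hk
          obtain ⟨hk2, hkN⟩ := Finset.mem_Icc.mp hk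
          simp only [Finset.mem_range]; omega
        · intro j hj
          simp only [Finset.mem_range] at hj
          simp only [Finset.mem_Icc]; omega
        · intro k hk
          obtain ⟨hk2, hkN⟩ := Finset.mem_Icc.mp hk
          omega
        · intro j hj
          simp only [Finset.mem_range] at hj
          omega
        · intro k hk; rfl
    _ = ((N - 1 : ℕ) : ℝ) * (((N - 1 : ℕ) : ℝ) + 1) / 2 * (3 * ε) := by rw [gauss_real]
    _ = ε * (3 * N * ((N : ℝ) - 1) / 2) := by
        have : ((N - 1 : ℕ) : ℝ) = (N : ℝ) - 1 := by
          have : 1 ≤ N := by omega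
          push_cast [this]; ring
        rw [this]; ring
end

section
/- Let N ≥ 2 be a natural number, s_N = 1/√(N²+1), let x be real with |x| ≤ s_N, and let ε ≥ 0. Suppose the real sequence (e_n) satisfies e_0 = 0, e_1 = 0, and e_n = 2x·e_{n−1} − e_{n−2} + ξ_n for 2 ≤ n ≤ N, where each perturbation satisfies |ξ_n| ≤ ε·(2|x|·|T_{n−1}(x)| + |T_n(x)|). Then |e_N| ≤ ε · 9(N−1)/2. -/
open Polynomial

set_option maxHeartbeats 1000000 in
/-- If `|x| ≤ s_N = 1/√(N²+1)`, `e_0 = e_1 = 0`,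
`e_n = 2x·e_{n−1} − e_{n−2} + ξ_n` for `2 ≤ n ≤ N`
with `|ξ_n| ≤ ε·(2|x|·|T_{n−1}(x)| + |T_n(x)|)`, then `|e_N| ≤ ε·9(N−1)/2`. -/
theorem chebyshev_algI_error_bound_small_x
    (N : ℕ) (hN : 2 ≤ N) (x : ℝ)
    (hx : |x| ≤ 1 / Real.sqrt ((N : ℝ) ^ 2 + 1)) (ε : ℝ) (hε : 0 ≤ ε)
    (ξ e : ℕ → ℝ)
    (h0 : e 0 = 0) (h1 : e 1 = 0)
    (hrec : ∀ n, 2 ≤ n → n ≤ N → e n = 2 * x * e (n - 1) - e (n - 2) + ξ n)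
    (hξ : ∀ n, 2 ≤ n → n ≤ N →
      |ξ n| ≤ ε * (2 * |x| * |(Chebyshev.T ℝ (n - 1 : ℕ)).eval x| +
        |(Chebyshev.T ℝ n).eval x|)) :
    |e N| ≤ ε * (9 * (N - 1) / 2) := by
  have hNr : (2:ℝ) ≤ (N:ℝ) := by exact_mod_cast hN
  have hNpos : (0:ℝ) < N := by linarith
  have habs : (0:ℝ) ≤ |x| := abs_nonneg x
  -- |x| * N ≤ 1
  have hsqrt : (N:ℝ) ≤ Real.sqrt ((N:ℝ)^2 + 1) := by
    nlinarith [Real.sq_sqrt (show (0:ℝ) ≤ (N:ℝ)^2 + 1 by positivity),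
      Real.sqrt_nonneg ((N:ℝ)^2 + 1)]
  have hq : |x| ≤ 1 / N :=
    hx.trans (one_div_le_one_div_of_le hNpos hsqrt)
  have hqN : |x| * N ≤ 1 := (le_div_iff₀ hNpos).1 hq
  have hx1 : |x| ≤ 1 := hq.trans (by rw [div_le_one hNpos]; linarith)
  have hx2 : |x| * |x| * (N * N) ≤ 1 := by
    nlinarith [mul_le_mul hqN hqN (mul_nonneg habs hNpos.le) zero_le_one]
  -- main induction, division-free form
  have key : ∀ n, 1 ≤ n → n ≤ N →
      |e n| * N ≤ ε * (((n:ℝ) - 1) * N + ((n:ℝ) - 1) ^ 2) := by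
    intro n
    induction n using Nat.strong_induction_on with
    | _ n ih =>
      intro hn1 hnN
      match n, hn1 with
      | 1, _ => norm_num [h1]
      | 2, _ =>
          have he2 : e 2 = ξ 2 := by
            have := hrec 2 le_rfl hnN; simpa [h0, h1] using this
          have hb := hξ 2 le_rfl hnN
          have hT1 : |(Chebyshev.T ℝ ((2:ℕ) - 1 : ℕ)).eval x| = |x| := by
            norm_num [Polynomial.Chebyshev.T_one]
          have hT2 : |(Chebyshev.T ℝ (2:ℕ)).eval x| ≤ 1 := cheb_abs_le_one _ _ hx1
          have hξ2 : |ξ 2| ≤ ε * (2 * |x| * |x| + 1) := by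
            refine hb.trans ?_
            rw [hT1]
            nlinarith [mul_nonneg (mul_nonneg hε habs) habs,
              mul_le_mul_of_nonneg_left hT2 hε]
          rw [he2]
          push_cast
          nlinarith [mul_le_mul_of_nonneg_right hξ2 hNpos.le,
            mul_le_mul_of_nonneg_left hx2 hε,
            mul_nonneg (mul_nonneg (mul_nonneg hε habs) habs) hNpos.le]
      | (m+3), _ =>
          have hm2N : m + 2 ≤ N := by omega
          have hm1N : m + 1 ≤ N := by omega
          have ih2 := ih (m+2) (by omega) (by omega) hm2N
          have ih1 := ih (m+1) (by omega) (by omega) hm1N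
          have hrecn := hrec (m+3) (by omega) hnN
          have hξn := hξ (m+3) (by omega) hnN
          have hTn1 : |(Chebyshev.T ℝ ((m+3:ℕ) - 1 : ℕ)).eval x| ≤ 1 :=
            cheb_abs_le_one _ _ hx1
          have hTn : |(Chebyshev.T ℝ (m+3:ℕ)).eval x| ≤ 1 := cheb_abs_le_one _ _ hx1
          have hξb : |ξ (m+3)| ≤ ε * (2 * |x| + 1) := by
            refine hξn.trans ?_
            nlinarith [mul_le_mul_of_nonneg_left hTn1 (mul_nonneg hε habs),
              mul_le_mul_of_nonneg_left hTn hε]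
          have hstep : |e (m+3)| ≤ 2 * |x| * |e (m+2)| + |e (m+1)| + |ξ (m+3)| := by
            have heq : e (m+3) = 2 * x * e (m+2) - e (m+1) + ξ (m+3) := by
              simpa using hrecn
            rw [heq]
            calc |2 * x * e (m+2) - e (m+1) + ξ (m+3)|
                ≤ |2 * x * e (m+2) - e (m+1)| + |ξ (m+3)| := abs_add_le _ _
              _ ≤ |2 * x * e (m+2)| + |e (m+1)| + |ξ (m+3)| := by
                  linarith [abs_sub (2 * x * e (m+2)) (e (m+1))]
              _ = 2 * |x| * |e (m+2)| + |e (m+1)| + |ξ (m+3)| := by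
                  rw [abs_mul, abs_mul, abs_two]
          have hm1Nr : (m : ℝ) + 1 ≤ N := by exact_mod_cast hm1N
          set μ : ℝ := (m : ℝ) with hμ
          have hμ0 : 0 ≤ μ := Nat.cast_nonneg m
          push_cast at ih1 ih2 ⊢
          have hx_m : |x| * (μ + 1) ≤ 1 :=
            (mul_le_mul_of_nonneg_left hm1Nr habs).trans hqN
          -- bound the first term
          have h2 : |x| * (|e (m+2)| * N) ≤ |x| * (ε * ((μ + 1) * N + (μ + 1)^2)) :=
            mul_le_mul_of_nonneg_left (by linarith [ih2]) habs
          have hεμ : (0:ℝ) ≤ ε * (μ + 1) := by positivity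
          have t1 := mul_le_mul_of_nonneg_left hqN hεμ
          have t2 := mul_le_mul_of_nonneg_left hx_m hεμ
          have h3 : |x| * (ε * ((μ + 1) * N + (μ + 1)^2)) ≤ 2 * ε * (μ + 1) := by
            nlinarith [t1, t2]
          have h4 : |ξ (m+3)| * N ≤ ε * N + 2 * ε := by
            have := mul_le_mul_of_nonneg_right hξb hNpos.le
            nlinarith [mul_le_mul_of_nonneg_left hqN hε]
          have h5 : |e (m+3)| * N ≤ (2 * |x| * |e (m+2)| + |e (m+1)| + |ξ (m+3)|) * N :=
            mul_le_mul_of_nonneg_right hstep hNpos.le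
          nlinarith [h2.trans h3, ih1, h4, h5, mul_nonneg hε (by linarith : (0:ℝ) ≤ (N:ℝ) - 2)]
  have hfin := key N (by omega) le_rfl
  have : |e N| * N ≤ (ε * (9 * ((N:ℝ) - 1) / 2)) * N := by
    nlinarith [hfin, mul_nonneg (mul_nonneg hε (by linarith : (0:ℝ) ≤ (N:ℝ) - 1)) hNpos.le,
      mul_nonneg (mul_nonneg hε (by linarith : (0:ℝ) ≤ (N:ℝ) - 1)) (by linarith : (0:ℝ) ≤ (N:ℝ) - 1)]
  exact le_of_mul_le_mul_right this hNpos
end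

section
/- Let N = 2m+1 be an odd natural number with m ≥ 1, s_N = 1/√(N²+1), and let x be real with |x| ≤ s_N. Then B_N(x) := Σ_{n=2}^{N} |T_n(x)|·|U_{N−n}(x)| satisfies B_N(x) ≤ (m(N−m) + (3/2)·m(m+2)) · |x|. -/
/-!
Write `x = sin φ`. The hypothesis says `N |tan φ| ≤ 1`, so `(N + 1) |φ| ≤ π` and
`cos φ ≥ 2/3`. Since `x = cos (π/2 - φ)`, the trigonometric forms of `T_n` and `U_k` give,
up to sign, `T_n(x) = cos nφ` or `sin nφ` and `U_k(x) cos φ = sin (k+1)φ` or `cos (k+1)φ`,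
according to parity. As `N` is odd, `n` and `k = N - n` have opposite parities: for even `n`
the term is at most `cos φ · (N + 1 - n) |x| / cos φ`, for odd `n` at most `n |x| · 3/2`,
using `|sin jφ| ≤ j |sin φ|` and `|cos nφ| ≤ cos φ`. Summing over `n` gives the bound.
-/

open Polynomial Real Finset

namespace Real

lemma abs_sin_nat_mul_le (n : ℕ) (t : ℝ) : |sin (n * t)| ≤ n * |sin t| := by
  induction n with
  | zero => simp
  | succ n ih =>
    calc |sin ((n + 1 : ℕ) * t)| = |sin (n * t) * cos t + cos (n * t) * sin t| := by
          push_cast; rw [add_mul, one_mul, sin_add]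
      _ ≤ |sin (n * t)| + |sin t| := by
          grw [abs_add_le, abs_mul, abs_mul, abs_cos_le_one, abs_cos_le_one, mul_one, one_mul]
      _ ≤ (n + 1 : ℕ) * |sin t| := by push_cast; linarith

lemma abs_cos_nat_mul_le_cos {n : ℕ} (hn : 1 ≤ n) {t : ℝ} (ht : (n + 1) * |t| ≤ π) :
    |cos (n * t)| ≤ cos t := by
  have hn_real : (1 : ℝ) ≤ n := by exact_mod_cast hn
  have ha := abs_nonneg t
  rw [← cos_abs (n * t), abs_mul, Nat.abs_cast, ← cos_abs t]
  refine abs_le.mpr ⟨?_, ?_⟩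
  · rw [← cos_pi_sub]
    exact cos_le_cos_of_nonneg_of_le_pi (by positivity) (by linarith) (by linarith)
  · exact cos_le_cos_of_nonneg_of_le_pi ha (by linarith) (by nlinarith)

lemma mul_abs_le_one_of_mul_abs_sin_le_cos {N φ : ℝ} (hN : 0 ≤ N) (hφ : |φ| < π / 2)
    (h : N * |sin φ| ≤ cos φ) : N * |φ| ≤ 1 := by
  have hcos : 0 < cos φ := cos_pos_of_mem_Ioo (abs_lt.mp hφ)
  have htan : |φ| * cos φ ≤ |sin φ| := by
    rw [abs_sin_eq_sin_abs_of_abs_le_pi (by linarith [pi_pos]), ← cos_abs,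
      ← le_div_iff₀ (by rwa [cos_abs]), ← tan_eq_sin_div_cos]
    exact le_tan (abs_nonneg φ) hφ
  nlinarith [abs_nonneg φ]

lemma exists_sin_eq_of_abs_le_one_div_sqrt {N x : ℝ} (hN : 1 ≤ N)
    (hx : |x| ≤ 1 / √(N ^ 2 + 1)) :
    ∃ φ, sin φ = x ∧ 2 / 3 ≤ cos φ ∧ (N + 1) * |φ| ≤ π := by
  have hx2 : x ^ 2 * (N ^ 2 + 1) ≤ 1 := by
    have := pow_le_pow_left₀ (abs_nonneg x) hx 2
    rwa [sq_abs, div_pow, one_pow, sq_sqrt (by positivity), le_div_iff₀ (by positivity)]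
      at this
  have hx1 : |x| ≤ 1 := by rw [← sq_le_one_iff_abs_le_one]; nlinarith
  have hsin : sin (arcsin x) = x := sin_arcsin (abs_le.mp hx1).1 (abs_le.mp hx1).2
  have hcos : 2 / 3 ≤ cos (arcsin x) := by
    rw [cos_arcsin, le_sqrt (by norm_num) (by nlinarith)]
    nlinarith
  have hNx : N * |sin (arcsin x)| ≤ cos (arcsin x) := by
    rw [hsin, cos_arcsin, le_sqrt (by positivity) (by nlinarith), mul_pow, sq_abs]
    linarith
  have hφ : |arcsin x| < π / 2 := by
    have hle := abs_le.mpr ⟨neg_pi_div_two_le_arcsin x, arcsin_le_pi_div_two x⟩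
    refine hle.lt_of_ne fun h ↦ ?_
    rw [← cos_abs, h, cos_pi_div_two] at hcos
    norm_num at hcos
  have := mul_abs_le_one_of_mul_abs_sin_le_cos (by linarith) hφ hNx
  exact ⟨arcsin x, hsin, hcos, by nlinarith [abs_nonneg (arcsin x), pi_gt_three]⟩

end Real

namespace Polynomial.Chebyshev

variable (φ : ℝ)

lemma abs_T_eval_sin_of_even {n : ℕ} (hn : Even n) :
    |(T ℝ n).eval (sin φ)| = |cos (n * φ)| := by
  obtain ⟨j, rfl⟩ := hn
  rw [← cos_pi_div_two_sub, T_real_cos,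
    show ((j + j : ℕ) : ℤ) * (π / 2 - φ) = j * π - (j + j : ℕ) * φ by push_cast; ring,
    cos_nat_mul_pi_sub, abs_mul, abs_neg_one_pow, one_mul]

lemma abs_T_eval_sin_of_odd {n : ℕ} (hn : Odd n) :
    |(T ℝ n).eval (sin φ)| = |sin (n * φ)| := by
  obtain ⟨j, rfl⟩ := hn
  rw [← cos_pi_div_two_sub, T_real_cos,
    show ((2 * j + 1 : ℕ) : ℤ) * (π / 2 - φ) = j * π - ((2 * j + 1 : ℕ) * φ - π / 2) by
      push_cast; ring,
    cos_nat_mul_pi_sub, cos_sub_pi_div_two, abs_mul, abs_neg_one_pow, one_mul]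

lemma abs_U_eval_sin_mul_abs_cos_of_odd {k : ℕ} (hk : Odd k) :
    |(U ℝ k).eval (sin φ)| * |cos φ| = |sin ((k + 1) * φ)| := by
  obtain ⟨j, rfl⟩ := hk
  rw [← abs_mul, ← sin_pi_div_two_sub, ← cos_pi_div_two_sub φ, U_real_cos,
    show (((2 * j + 1 : ℕ) : ℤ) + 1) * (π / 2 - φ)
        = (j + 1 : ℕ) * π - ((2 * j + 1 : ℕ) + 1) * φ by
      push_cast; ring,
    sin_nat_mul_pi_sub, abs_neg, abs_mul, abs_neg_one_pow, one_mul]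

lemma abs_U_eval_sin_mul_abs_cos_of_even {k : ℕ} (hk : Even k) :
    |(U ℝ k).eval (sin φ)| * |cos φ| = |cos ((k + 1) * φ)| := by
  obtain ⟨j, rfl⟩ := hk
  rw [← abs_mul, ← sin_pi_div_two_sub, ← cos_pi_div_two_sub φ, U_real_cos,
    show (((j + j : ℕ) : ℤ) + 1) * (π / 2 - φ)
        = j * π - (((j + j : ℕ) + 1) * φ - π / 2) by
      push_cast; ring,
    sin_nat_mul_pi_sub, sin_sub_pi_div_two, abs_neg, abs_mul, abs_neg_one_pow, one_mul, abs_neg]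

lemma abs_T_mul_abs_U_eval_sin_le_of_even {n k : ℕ} (hn : Even n) (hn₁ : 1 ≤ n) (hk : Odd k)
    (hφ : (n + 1) * |φ| ≤ π) (hcos : 0 < cos φ) :
    |(T ℝ n).eval (sin φ)| * |(U ℝ k).eval (sin φ)| ≤ (k + 1) * |sin φ| := by
  calc |(T ℝ n).eval (sin φ)| * |(U ℝ k).eval (sin φ)|
      ≤ |(U ℝ k).eval (sin φ)| * |cos φ| := by
        rw [mul_comm, abs_of_pos hcos, abs_T_eval_sin_of_even φ hn]
        gcongr
        exact abs_cos_nat_mul_le_cos hn₁ hφ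
    _ = |sin ((k + 1 : ℕ) * φ)| := by
        rw [abs_U_eval_sin_mul_abs_cos_of_odd φ hk]; push_cast; rfl
    _ ≤ (k + 1) * |sin φ| := by
        grw [abs_sin_nat_mul_le]; push_cast; rfl

lemma abs_T_mul_abs_U_eval_sin_le_of_odd {n k : ℕ} (hn : Odd n) (hk : Even k)
    (hcos : 2 / 3 ≤ cos φ) :
    |(T ℝ n).eval (sin φ)| * |(U ℝ k).eval (sin φ)| ≤ 3 / 2 * n * |sin φ| := by
  have hU : |(U ℝ k).eval (sin φ)| ≤ 3 / 2 := by
    have h := abs_U_eval_sin_mul_abs_cos_of_even φ hk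
    rw [abs_of_pos (a := cos φ) (by linarith)] at h
    nlinarith [abs_cos_le_one ((k + 1) * φ), abs_nonneg ((U ℝ k).eval (sin φ))]
  rw [abs_T_eval_sin_of_odd φ hn]
  calc |sin (n * φ)| * |(U ℝ k).eval (sin φ)| ≤ (n * |sin φ|) * (3 / 2) := by
        gcongr
        exact abs_sin_nat_mul_le n φ
    _ = 3 / 2 * n * |sin φ| := by ring

lemma abs_T_mul_abs_U_eval_sin_le {N n : ℕ} (hN : Odd N) (hn₁ : 1 ≤ n) (hnN : n ≤ N)
    (hφ : (N + 1) * |φ| ≤ π) (hcos : 2 / 3 ≤ cos φ) :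
    |(T ℝ n).eval (sin φ)| * |(U ℝ ((N : ℤ) - n)).eval (sin φ)|
      ≤ (if Even n then (N + 1 - n : ℝ) else 3 / 2 * n) * |sin φ| := by
  rw [← Nat.cast_sub hnN]
  split_ifs with hn
  · have hN' : (n : ℝ) ≤ N := by exact_mod_cast hnN
    refine (abs_T_mul_abs_U_eval_sin_le_of_even φ hn hn₁ (Nat.Odd.sub_even hnN hN hn)
      (by nlinarith [abs_nonneg φ]) (by linarith)).trans_eq ?_
    rw [Nat.cast_sub hnN]
    ring
  · rw [Nat.not_even_iff_odd] at hn
    exact abs_T_mul_abs_U_eval_sin_le_of_odd φ hn (Nat.Odd.sub_odd hN hn) hcos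

end Polynomial.Chebyshev

lemma sum_Icc_two_two_mul_add_one_ite_even (m : ℕ) (c : ℝ) :
    ∑ n ∈ Icc 2 (2 * m + 1), (if Even n then c - n else 3 / 2 * n)
      = m * c - m * (m + 1) + 3 / 2 * m * (m + 2) := by
  induction m with
  | zero => simp
  | succ m ih =>
    have h_even : Even (2 * m + 2) := ⟨m + 1, by ring⟩
    have h_odd : ¬Even (2 * m + 2 + 1) := Nat.not_even_iff_odd.mpr ⟨m + 1, by ring⟩
    rw [show 2 * (m + 1) + 1 = 2 * m + 2 + 1 by ring, sum_Icc_succ_top (by omega),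
      sum_Icc_succ_top (by omega), ih, if_pos h_even, if_neg h_odd]
    push_cast
    ring

theorem chebyshev_BN_bound_general
    (m : ℕ) (N : ℕ) (hN : N = 2 * m + 1) (x : ℝ)
    (hx : |x| ≤ 1 / Real.sqrt ((N : ℝ) ^ 2 + 1)) :
    ∑ n ∈ Finset.Icc 2 N,
        |(Chebyshev.T ℝ n).eval x| * |(Chebyshev.U ℝ ((N : ℤ) - n)).eval x|
      ≤ ((m : ℝ) * ((N : ℝ) - m) + 3 / 2 * m * (m + 2)) * |x| := by
  obtain ⟨φ, rfl, hcos, hφ⟩ :=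
    Real.exists_sin_eq_of_abs_le_one_div_sqrt (by rw [hN]; norm_num : (1 : ℝ) ≤ N) hx
  calc _ ≤ ∑ n ∈ Icc 2 N, (if Even n then (N + 1 - n : ℝ) else 3 / 2 * n) * |sin φ| := by
        refine sum_le_sum fun n hn ↦ ?_
        rw [mem_Icc] at hn
        exact Chebyshev.abs_T_mul_abs_U_eval_sin_le φ (by simp [hN]) (by omega) hn.2 hφ hcos
    _ = ((m : ℝ) * ((N : ℝ) - m) + 3 / 2 * m * (m + 2)) * |sin φ| := by
        rw [← sum_mul, hN, sum_Icc_two_two_mul_add_one_ite_even]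
        push_cast
        ring

/-- For odd `N = 2m+1` with `m ≥ 1` and `|x| ≤ s_N = 1/√(N²+1)`, one has
`B_N(x) = Σ_{n=2}^{N} |T_n(x)|·|U_{N−n}(x)| ≤ (m(N−m) + (3/2)·m(m+2))·|x|`. -/
theorem chebyshev_BN_bound
    (m : ℕ) (hm : 1 ≤ m) (N : ℕ) (hN : N = 2 * m + 1) (x : ℝ)
    (hx : |x| ≤ 1 / Real.sqrt ((N : ℝ) ^ 2 + 1)) :
    ∑ n ∈ Finset.Icc 2 N,
        |(Chebyshev.T ℝ n).eval x| * |(Chebyshev.U ℝ ((N : ℤ) - n)).eval x|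
      ≤ ((m : ℝ) * ((N : ℝ) - m) + 3 / 2 * m * (m + 2)) * |x| :=
  chebyshev_BN_bound_general m N hN x hx
end

section
/- Let N ≥ 3 be an odd natural number, s_N = 1/√(N²+1), and let ε, L₂ ≥ 0. Let x be real with |x| ≤ s_N, and let y be real with |y − T_N(x)| ≤ ε·L₂·|x|. Then |y − T_N(x)| ≤ ε·(L₂/N)·C_N(x), where C_N(x) = |T_N(x)| + |x·T_N'(x)|. -/
/-!
The Pell-type identity `T_n² + (1 - X²) U_{n-1}² = 1` and `T_n' = n U_{n-1}` give
`(1 - x²) T_n'(x)² = n² (1 - T_n(x)²)`, hence `|T_n'(x)| ≥ |n| (1 - |T_n(x)|)` for every real `x`.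
Splitting `|n x| = |n x| |T_n(x)| + |x| |n| (1 - |T_n(x)|)`, this yields
`|n x| ≤ |T_n(x)| + |x T_n'(x)|` as soon as `|n x| ≤ 1`, which `|x| ≤ s_N` guarantees for `n = N`.
-/

open Polynomial

namespace Polynomial.Chebyshev

section CommRing

variable (R : Type*) [CommRing R]

theorem U_sq_add_U_sq (n : ℤ) :
    U R n ^ 2 + U R (n + 1) ^ 2 - 2 * X * U R n * U R (n + 1) = 1 := by
  induction n with
  | zero => simp only [U_zero, U_one, zero_add]; ring
  | succ n ih =>
    have h₁ := U_add_two R n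
    linear_combination (norm := ring_nf) (U R (2 + n) - U R n) * h₁ + ih
  | pred n ih =>
    have h₁ := U_sub_one R (-n)
    linear_combination (norm := ring_nf) (U R (-1 - n) - U R (1 - n)) * h₁ + ih

theorem T_sq_add_one_sub_X_sq_mul_U_sq (n : ℤ) :
    T R n ^ 2 + (1 - X ^ 2) * U R (n - 1) ^ 2 = 1 := by
  have h := U_sq_add_U_sq R (n - 1)
  rw [sub_add_cancel] at h
  rw [T_eq_U_sub_X_mul_U]
  linear_combination h

theorem one_sub_X_sq_mul_derivative_T_sq (n : ℤ) :
    (1 - X ^ 2) * derivative (T R n) ^ 2 = (n : R[X]) ^ 2 * (1 - T R n ^ 2) := by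
  rw [T_derivative_eq_U]
  linear_combination (n : R[X]) ^ 2 * T_sq_add_one_sub_X_sq_mul_U_sq R n

end CommRing

theorem abs_mul_one_sub_abs_eval_T_le_abs_eval_derivative_T (n : ℤ) (x : ℝ) :
    |(n : ℝ)| * (1 - |(T ℝ n).eval x|) ≤ |(derivative (T ℝ n)).eval x| := by
  set t := (T ℝ n).eval x
  set d := (derivative (T ℝ n)).eval x
  rcases le_or_gt 1 |t| with ht | ht
  · exact (mul_nonpos_of_nonneg_of_nonpos (abs_nonneg _) (by linarith)).trans (abs_nonneg _)
  have key : (1 - x ^ 2) * d ^ 2 = (n : ℝ) ^ 2 * (1 - t ^ 2) := by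
    simpa using congr_arg (eval x) (one_sub_X_sq_mul_derivative_T_sq ℝ n)
  refine (pow_le_pow_iff_left₀ (by positivity) (abs_nonneg d) two_ne_zero).mp ?_
  calc (|(n : ℝ)| * (1 - |t|)) ^ 2 = (n : ℝ) ^ 2 * (1 - |t|) ^ 2 := by rw [mul_pow, sq_abs]
    _ ≤ (n : ℝ) ^ 2 * (1 - t ^ 2) := by
      rw [← sq_abs t]
      gcongr
      nlinarith [abs_nonneg t]
    _ = (1 - x ^ 2) * d ^ 2 := key.symm
    _ ≤ |d| ^ 2 := by nlinarith [sq_abs d, sq_nonneg (x * d)]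

theorem abs_mul_abs_le_abs_eval_T_add_abs_mul_eval_derivative_T (n : ℤ) {x : ℝ}
    (hx : |(n : ℝ)| * |x| ≤ 1) :
    |(n : ℝ)| * |x| ≤ |(T ℝ n).eval x| + |x * (derivative (T ℝ n)).eval x| := by
  have hd := abs_mul_one_sub_abs_eval_T_le_abs_eval_derivative_T n x
  have ht : |(n : ℝ)| * |x| * |(T ℝ n).eval x| ≤ |(T ℝ n).eval x| :=
    mul_le_of_le_one_left (abs_nonneg _) hx
  rw [abs_mul]
  nlinarith [abs_nonneg x]

end Polynomial.Chebyshev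

open Polynomial.Chebyshev in
theorem chebyshev_backward_stable_odd_general
    (N : ℕ) (hN : 3 ≤ N) (ε L₂ : ℝ) (hε : 0 ≤ ε) (hL₂ : 0 ≤ L₂)
    (x y : ℝ) (hx : |x| ≤ 1 / Real.sqrt ((N : ℝ) ^ 2 + 1))
    (hy : |y - (Chebyshev.T ℝ N).eval x| ≤ ε * L₂ * |x|) :
    |y - (Chebyshev.T ℝ N).eval x| ≤
      ε * (L₂ / N) * (|(Chebyshev.T ℝ N).eval x| +
        |x * (derivative (Chebyshev.T ℝ N)).eval x|) := by
  have hN₀ : (N : ℝ) ≠ 0 := by positivity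
  have hNx : (N : ℝ) * |x| ≤ 1 := by
    have hs : (N : ℝ) ≤ Real.sqrt ((N : ℝ) ^ 2 + 1) := Real.le_sqrt_of_sq_le (by linarith)
    rw [le_div_iff₀ (by positivity)] at hx
    nlinarith [abs_nonneg x]
  have hC : (N : ℝ) * |x| ≤ |(T ℝ N).eval x| + |x * (derivative (T ℝ N)).eval x| := by
    simpa using abs_mul_abs_le_abs_eval_T_add_abs_mul_eval_derivative_T N (by simpa using hNx)
  calc |y - (T ℝ N).eval x| ≤ ε * L₂ * |x| := hy
    _ = ε * (L₂ / N) * (N * |x|) := by field_simp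
    _ ≤ _ := by gcongr

/-- Backward stability (Corollary, case (iii)): if `N ≥ 3` is odd,
`|x| ≤ s_N = 1/√(N²+1)` and `|y − T_N(x)| ≤ ε·L₂·|x|`, then
`|y − T_N(x)| ≤ ε·(L₂/N)·C_N(x)` with `C_N(x) = |T_N(x)| + |x·T_N'(x)|`. -/
theorem chebyshev_backward_stable_odd
    (N : ℕ) (hN : 3 ≤ N) (hNodd : Odd N) (ε L₂ : ℝ) (hε : 0 ≤ ε) (hL₂ : 0 ≤ L₂)
    (x y : ℝ) (hx : |x| ≤ 1 / Real.sqrt ((N : ℝ) ^ 2 + 1))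
    (hy : |y - (Chebyshev.T ℝ N).eval x| ≤ ε * L₂ * |x|) :
    |y - (Chebyshev.T ℝ N).eval x| ≤
      ε * (L₂ / N) * (|(Chebyshev.T ℝ N).eval x| +
        |x * (derivative (Chebyshev.T ℝ N)).eval x|) :=
  chebyshev_backward_stable_odd_general N hN ε L₂ hε hL₂ x y hx hy
end
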